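/- arXiv:2204.00234 — 2 statements merged into one kernel-verified Lean document; each statement's English description precedes it below -/
import Mathlib

section
/- For every even integer j ≥ 4 and every integer i with j < i < 2j and i odd, F_i ≡ F_{2j-i} (mod F_j). -/
lemma fib_aux (j : ℕ) (hj : 1 ≤ j) :
    ∀ k, k ≤ j → (Nat.fib (j + k) : ZMod (Nat.fib j)) = (-1) ^ (k + 1) * Nat.fib (j - k) := by
  intro k
  induction k using Nat.strong_induction_on with
  | _ k ih =>
    match k with
    | 0 => intro _; simp [ZMod.natCast_self]
    | 1 =>
      intro _
      have h : j + 1 = (j - 1) + 1 + 1 := by omega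
      rw [h, Nat.fib_add_two]
      have h2 : (j - 1) + 1 = j := by omega
      rw [h2]
      push_cast
      rw [ZMod.natCast_self]
      ring
    | (k + 2) =>
      intro hk
      have h1 := ih k (by omega) (by omega)
      have h2 := ih (k + 1) (by omega) (by omega)
      have e : j + (k + 2) = (j + k) + 2 := by ring
      rw [e, Nat.fib_add_two]
      push_cast
      rw [show j + k + 1 = j + (k+1) by ring, h1, h2]
      set n := j - (k + 2) with hn
      have e2 : j - k = n + 2 := by omega
      have e3 : j - (k + 1) = n + 1 := by omega
      rw [e2, e3, Nat.fib_add_two]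
      push_cast
      ring

theorem fib_modEq_even_j_odd_i (j i : ℕ) (hj : 4 ≤ j) (hje : Even j)
    (hi1 : j < i) (hi2 : i < 2 * j) (hio : Odd i) :
    Nat.fib i ≡ Nat.fib (2 * j - i) [MOD Nat.fib j] := by
  set k := i - j with hk
  have hko : Odd k := by
    rcases hio with ⟨m, hm⟩
    rcases hje with ⟨l, hl⟩
    refine ⟨m - l, by omega⟩
  have h1 : i = j + k := by omega
  have h2 : 2 * j - i = j - k := by omega
  rw [← ZMod.natCast_eq_natCast_iff, h2, h1, fib_aux j (by omega) k (by omega)]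
  have : (-1 : ZMod (Nat.fib j)) ^ (k + 1) = 1 := by
    rcases hko with ⟨m, hm⟩
    rw [hm]
    rw [show 2 * m + 1 + 1 = 2 * (m + 1) by ring, pow_mul]
    norm_num
  rw [this, one_mul]
end

section
/- For every even integer j ≥ 4 and every integer i ≥ 0, F_{i+2j} ≡ F_i (mod F_j); moreover no smaller positive period exists, i.e., the sequence (F_i mod F_j) has minimal period exactly 2j. -/
open Nat

private lemma cassini_int (n : ℕ) :
    (fib (n + 2) : ℤ) * fib n - (fib (n + 1)) ^ 2 = (-1) ^ (n + 1) := by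
  induction n with
  | zero => simp
  | succ n ih =>
    have h : (fib (n + 3) : ℤ) = fib (n + 1) + fib (n + 2) := by
      have := fib_add_two (n := n + 1); push_cast [this]; ring
    have h2 : (fib (n + 2) : ℤ) = fib n + fib (n + 1) := by
      have := fib_add_two (n := n); push_cast [this]; ring
    rw [show n + 1 + 2 = n + 3 by ring, show n + 1 + 1 = n + 2 by ring, h, pow_succ]
    linear_combination (-1 : ℤ) * ih - (fib (n + 2) : ℤ) * h2

private lemma fib_succ_sq_modeq_one (j : ℕ) (hj : 4 ≤ j) (hje : Even j) :
    fib (j + 1) ^ 2 ≡ 1 [MOD fib j] := by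
  obtain ⟨m, rfl⟩ : ∃ m, j = m + 2 := ⟨j - 2, by omega⟩
  have hpar : (-1 : ℤ) ^ (m + 1 + 1) = 1 := by
    have : Even (m + 2) := hje
    simpa using this.neg_one_pow
  have hc : (fib (m + 3) : ℤ) * fib (m + 1) = fib (m + 2) ^ 2 + 1 := by
    have h := cassini_int (m + 1)
    rw [show m + 1 + 2 = m + 3 by ring, show m + 1 + 1 = m + 2 by ring] at h
    rw [hpar] at h
    linarith
  have hcN : fib (m + 3) * fib (m + 1) = fib (m + 2) ^ 2 + 1 := by
    exact_mod_cast hc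
  -- fib (m+3) ≡ fib (m+1) [MOD fib (m+2)]
  have h1 : fib (m + 3) ≡ fib (m + 1) [MOD fib (m + 2)] := by
    have : fib (m + 3) = fib (m + 1) + fib (m + 2) := fib_add_two
    rw [this]
    simpa using (Nat.ModEq.refl (fib (m + 1))).add (Nat.modEq_zero_iff_dvd.2 dvd_rfl).symm
  calc fib (m + 2 + 1) ^ 2 = fib (m + 3) * fib (m + 3) := by ring_nf
    _ ≡ fib (m + 3) * fib (m + 1) [MOD fib (m + 2)] := (Nat.ModEq.refl _).mul h1
    _ = fib (m + 2) ^ 2 + 1 := hcN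
    _ ≡ 0 + 1 [MOD fib (m + 2)] :=
        ((Nat.modEq_zero_iff_dvd.2 ⟨fib (m + 2), by ring⟩)).add (Nat.ModEq.refl 1)
    _ = 1 := by ring

private lemma period_of_two (m p : ℕ) (h0 : fib p ≡ 0 [MOD m]) (h1 : fib (p + 1) ≡ 1 [MOD m]) :
    ∀ i, fib (i + p) ≡ fib i [MOD m] := by
  have key : ∀ i, fib (i + p) ≡ fib i [MOD m] ∧ fib (i + 1 + p) ≡ fib (i + 1) [MOD m] := by
    intro i
    induction i with
    | zero => exact ⟨by simpa using h0, by simpa [Nat.add_comm] using h1⟩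
    | succ n ih =>
      refine ⟨ih.2, ?_⟩
      have e1 : fib (n + 1 + 1 + p) = fib (n + p) + fib (n + 1 + p) := by
        rw [show n + 1 + 1 + p = (n + p) + 2 by ring]
        rw [fib_add_two, show n + p + 1 = n + 1 + p by ring]
      have e2 : fib (n + 1 + 1) = fib n + fib (n + 1) := fib_add_two
      rw [e1, e2]
      exact ih.1.add ih.2
  exact fun i => (key i).1

theorem fib_mod_minimal_period_even (j : ℕ) (hj : 4 ≤ j) (hje : Even j) :
    IsLeast {p : ℕ | 0 < p ∧ ∀ i : ℕ, Nat.fib (i + p) ≡ Nat.fib i [MOD Nat.fib j]} (2 * j) := by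
  have hfj3 : 3 ≤ fib j := by
    calc 3 = fib 4 := rfl
    _ ≤ fib j := fib_mono hj
  constructor
  · refine ⟨by omega, ?_⟩
    apply period_of_two
    · exact Nat.modEq_zero_iff_dvd.2 (fib_dvd j (2 * j) ⟨2, by ring⟩)
    · -- fib (2j + 1) = fib j ^ 2 + fib (j+1)^2 ≡ 1
      have h := fib_add j j
      rw [show j + j + 1 = 2 * j + 1 by ring] at h
      calc fib (2 * j + 1) = fib j * fib j + fib (j + 1) ^ 2 := by rw [h]; ring
        _ ≡ 0 + 1 [MOD fib j] :=
            (Nat.modEq_zero_iff_dvd.2 ⟨fib j, rfl⟩).add (fib_succ_sq_modeq_one j hj hje)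
        _ = 1 := by ring
  · rintro p ⟨hp0, hper⟩
    by_contra hlt
    push_neg at hlt
    -- fib j ∣ fib p
    have h0 : fib j ∣ fib p := by
      exact Nat.modEq_zero_iff_dvd.1 (by simpa using hper 0)
    -- gcd j p = j hence j ∣ p
    have hg : fib (Nat.gcd j p) = fib j := by
      rw [fib_gcd, Nat.gcd_eq_left h0]
    have hjp : j ∣ p := by
      have hgle : Nat.gcd j p ≤ j := Nat.le_of_dvd (by omega) (Nat.gcd_dvd_left j p)
      have hgj : Nat.gcd j p = j := by
        by_contra hne
        have hglt : Nat.gcd j p < j := lt_of_le_of_ne hgle hne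
        have : fib (Nat.gcd j p) < fib j := by
          rcases Nat.lt_or_ge (Nat.gcd j p) 2 with h2 | h2
          · have : fib (Nat.gcd j p) ≤ 1 := by
              interval_cases h : Nat.gcd j p <;> simp [fib]
            omega
          · have hmono := fib_add_two_strictMono
              (show Nat.gcd j p - 2 < j - 2 by omega)
            simp only at hmono
            rwa [Nat.sub_add_cancel h2, Nat.sub_add_cancel (by omega)] at hmono
        omega
      rw [← hgj]; exact Nat.gcd_dvd_right j p
    obtain ⟨k, rfl⟩ := hjp
    have hk : k = 1 := by
      rcases k with _ | _ | k
      · omega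
      · rfl
      · exfalso
        have h2j : 2 * j ≤ j * (k + 1 + 1) := by nlinarith
        omega
    subst hk
    rw [mul_one] at hper hp0 hlt
    -- fib (1 + j) ≡ 1 [MOD fib j], but fib (1+j) ≡ fib (j-1) and 2 ≤ fib (j-1) < fib j
    have h1 := hper 1
    rw [fib_one] at h1
    obtain ⟨m, rfl⟩ : ∃ m, j = m + 2 := ⟨j - 2, by omega⟩
    have e : fib (1 + (m + 2)) = fib (m + 1) + fib (m + 2) := by
      rw [show 1 + (m + 2) = (m + 1) + 2 by ring, fib_add_two]
    have h2 : fib (m + 1) ≡ 1 [MOD fib (m + 2)] := by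
      have : fib (m + 1) + fib (m + 2) ≡ fib (m + 1) + 0 [MOD fib (m + 2)] :=
        (Nat.ModEq.refl _).add (Nat.modEq_zero_iff_dvd.2 dvd_rfl)
      calc fib (m + 1) = fib (m + 1) + 0 := by ring
        _ ≡ fib (m + 1) + fib (m + 2) [MOD fib (m + 2)] := this.symm
        _ = fib (1 + (m + 2)) := e.symm
        _ ≡ 1 [MOD fib (m + 2)] := h1
    have hlt1 : fib (m + 1) < fib (m + 2) := fib_lt_fib_succ (by omega)
    have hge2 : 2 ≤ fib (m + 1) := by
      calc 2 = fib 3 := rfl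
      _ ≤ fib (m + 1) := fib_mono (by omega)
    have := (Nat.ModEq.eq_of_lt_of_lt h2 hlt1 (by omega))
    omega
end
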